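/- arXiv:0911.4075 — 2 statements merged into one kernel-verified Lean document; each statement's English description precedes it below -/
import Mathlib

section
/- If X is a T1 topological space with cs*_χ(X) < 𝔭, then cs_χ(X) = cs*_χ(X). -/
open Set Filter Topology Cardinal Pointwise

universe u v

section Defs

variable {X : Type u} [TopologicalSpace X]

/-- A sequence converging to `x`: a countably infinite set `S` such that `S \ U` is finite
for every neighborhood `U` of `x`. -/
def ConvSeqTo (S : Set X) (x : X) : Prop :=
  S.Countable ∧ S.Infinite ∧ ∀ U ∈ 𝓝 x, (S \ U).Finite

/-- `𝒩` is a cs*-network at `x`: for every neighborhood `U` of `x` and every sequence `S`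
converging to `x` there is `N ∈ 𝒩` with `N ⊆ U` containing infinitely many members of `S`. -/
def IsCsStarNetworkAt (𝒩 : Set (Set X)) (x : X) : Prop :=
  ∀ U ∈ 𝓝 x, ∀ S : Set X, ConvSeqTo S x → ∃ N ∈ 𝒩, N ⊆ U ∧ (S ∩ N).Infinite

/-- `𝒩` is a cs-network at `x`: for every neighborhood `U` of `x` and every sequence `S`
converging to `x` there is `N ∈ 𝒩` with `N ⊆ U` containing all but finitely many members. -/
def IsCsNetworkAt (𝒩 : Set (Set X)) (x : X) : Prop :=
  ∀ U ∈ 𝓝 x, ∀ S : Set X, ConvSeqTo S x → ∃ N ∈ 𝒩, N ⊆ U ∧ (S \ N).Finite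

/-- `B` is a sequential barrier at `x`: every sequence converging to `x` lies eventually in `B`. -/
def IsSeqBarrierAt (B : Set X) (x : X) : Prop :=
  ∀ S : Set X, ConvSeqTo S x → (S \ B).Finite

/-- `𝒩` is an sb-network at `x`. -/
def IsSbNetworkAt (𝒩 : Set (Set X)) (x : X) : Prop :=
  ∀ U ∈ 𝓝 x, ∃ N ∈ 𝒩, x ∈ N ∧ N ⊆ U ∧ IsSeqBarrierAt N x

/-- `𝒩` is a neighborhood base at `x`. -/
def IsNbhdBasisAt (𝒩 : Set (Set X)) (x : X) : Prop :=
  (∀ N ∈ 𝒩, N ∈ 𝓝 x) ∧ ∀ U ∈ 𝓝 x, ∃ N ∈ 𝒩, N ⊆ U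

/-- Smallest cardinality of a cs*-network at `x`. -/
noncomputable def csStarCharAt (x : X) : Cardinal.{u} :=
  sInf {c | ∃ 𝒩 : Set (Set X), IsCsStarNetworkAt 𝒩 x ∧ #𝒩 = c}

/-- Smallest cardinality of a cs-network at `x`. -/
noncomputable def csCharAt (x : X) : Cardinal.{u} :=
  sInf {c | ∃ 𝒩 : Set (Set X), IsCsNetworkAt 𝒩 x ∧ #𝒩 = c}

/-- Smallest cardinality of an sb-network at `x`. -/
noncomputable def sbCharAt (x : X) : Cardinal.{u} :=
  sInf {c | ∃ 𝒩 : Set (Set X), IsSbNetworkAt 𝒩 x ∧ #𝒩 = c}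

/-- Smallest cardinality of a neighborhood base at `x`. -/
noncomputable def charAt (x : X) : Cardinal.{u} :=
  sInf {c | ∃ 𝒩 : Set (Set X), IsNbhdBasisAt 𝒩 x ∧ #𝒩 = c}

end Defs

/-- The cs*-character of a space (`1` for the empty space). -/
noncomputable def csStarChar (X : Type u) [TopologicalSpace X] : Cardinal.{u} :=
  max 1 (⨆ x : X, csStarCharAt x)

/-- The cs-character of a space (`1` for the empty space). -/
noncomputable def csChar (X : Type u) [TopologicalSpace X] : Cardinal.{u} :=
  max 1 (⨆ x : X, csCharAt x)

/-- The sb-character of a space (`1` for the empty space). -/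
noncomputable def sbChar (X : Type u) [TopologicalSpace X] : Cardinal.{u} :=
  max 1 (⨆ x : X, sbCharAt x)

/-- The character of a space (`1` for the empty space). -/
noncomputable def charCard (X : Type u) [TopologicalSpace X] : Cardinal.{u} :=
  max 1 (⨆ x : X, charAt x)

/-- `X` has countable cs*-character: every point has a countable cs*-network. -/
def CountableCsStarChar (X : Type u) [TopologicalSpace X] : Prop :=
  ∀ x : X, ∃ 𝒩 : Set (Set X), 𝒩.Countable ∧ IsCsStarNetworkAt 𝒩 x

/-- `X` has countable sb-character: every point has a countable sb-network. -/
def CountableSbChar (X : Type u) [TopologicalSpace X] : Prop :=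
  ∀ x : X, ∃ 𝒩 : Set (Set X), 𝒩.Countable ∧ IsSbNetworkAt 𝒩 x

/-- `X` carries the inductive topology with respect to the cover `𝒞`: a set is closed iff its
trace on each `C ∈ 𝒞` is closed in the subspace `C`. -/
def InductiveTopology (X : Type u) [TopologicalSpace X] (𝒞 : Set (Set X)) : Prop :=
  ∀ F : Set X, IsClosed F ↔ ∀ C ∈ 𝒞, IsClosed (Subtype.val ⁻¹' F : Set C)

/-- A `k_ω`-space: inductive topology w.r.t. a countable cover by compact sets. -/
def IsKOmegaSpace (X : Type u) [TopologicalSpace X] : Prop :=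
  ∃ 𝒞 : Set (Set X), 𝒞.Countable ∧ ⋃₀ 𝒞 = Set.univ ∧ (∀ C ∈ 𝒞, IsCompact C) ∧
    InductiveTopology X 𝒞

/-- An `MK_ω`-space: inductive topology w.r.t. a countable cover by compact metrizable sets. -/
def IsMKOmegaSpace (X : Type u) [TopologicalSpace X] : Prop :=
  ∃ 𝒞 : Set (Set X), 𝒞.Countable ∧ ⋃₀ 𝒞 = Set.univ ∧
    (∀ C ∈ 𝒞, IsCompact C ∧ TopologicalSpace.MetrizableSpace C) ∧ InductiveTopology X 𝒞

/-- An `M_ω`-space: inductive topology w.r.t. a countable cover by closed metrizable sets. -/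
def IsMOmegaSpace (X : Type u) [TopologicalSpace X] : Prop :=
  ∃ 𝒞 : Set (Set X), 𝒞.Countable ∧ ⋃₀ 𝒞 = Set.univ ∧
    (∀ C ∈ 𝒞, IsClosed C ∧ TopologicalSpace.MetrizableSpace C) ∧ InductiveTopology X 𝒞

/-- An α₄-space: given countably many sequences converging to a common point `x`, some sequence
converging to `x` meets infinitely many of them. -/
def Alpha4Space (X : Type u) [TopologicalSpace X] : Prop :=
  ∀ (x : X) (S : ℕ → Set X), (∀ n, ConvSeqTo (S n) x) →
    ∃ T : Set X, ConvSeqTo T x ∧ {n | (T ∩ S n).Nonempty}.Infinite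

/-- An α₇-space: given countably many sequences converging to a common point `x`, some sequence
converging to some point `y` meets infinitely many of them. -/
def Alpha7Space (X : Type u) [TopologicalSpace X] : Prop :=
  ∀ (x : X) (S : ℕ → Set X), (∀ n, ConvSeqTo (S n) x) →
    ∃ (T : Set X) (y : X), ConvSeqTo T y ∧ {n | (T ∩ S n).Nonempty}.Infinite

/-- The small cardinal 𝔭: the smallest cardinality of a family of infinite subsets of ω closed
under finite intersections and having no infinite pseudo-intersection. -/
noncomputable def pCard : Cardinal.{0} :=
  sInf {c | ∃ F : Set (Set ℕ), (∀ A ∈ F, A.Infinite) ∧ (∀ A ∈ F, ∀ B ∈ F, A ∩ B ∈ F) ∧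
    (¬ ∃ I : Set ℕ, I.Infinite ∧ ∀ A ∈ F, (I \ A).Finite) ∧ #F = c}

/-- The small cardinal 𝔡: the smallest cardinality of a dominating family in `ℕ → ℕ`. -/
noncomputable def dCard : Cardinal.{0} :=
  sInf {c | ∃ D : Set (ℕ → ℕ), (∀ f : ℕ → ℕ, ∃ g ∈ D, ∀ n, f n ≤ g n) ∧ #D = c}

/-- The pseudocharacter of `X`: the least `c` such that every singleton is the intersection of a
family of at most `c` open sets. -/
noncomputable def psiChar (X : Type u) [TopologicalSpace X] : Cardinal.{u} :=
  sInf {c | ∀ x : X, ∃ 𝒰 : Set (Set X), (∀ U ∈ 𝒰, IsOpen U) ∧ ⋂₀ 𝒰 = {x} ∧ #𝒰 ≤ c}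

/-- The weight of `X`: the smallest cardinality of a base of the topology. -/
noncomputable def weightCard (X : Type u) [TopologicalSpace X] : Cardinal.{u} :=
  sInf {c | ∃ B : Set (Set X), TopologicalSpace.IsTopologicalBasis B ∧ #B = c}

/-- Transfinite iteration of the sequential closure: `A^{(α)}`. -/
noncomputable def seqClIter {X : Type u} [TopologicalSpace X] (A : Set X) :
    Ordinal.{0} → Set X
  | α => A ∪ ⋃ β : {β : Ordinal.{0} // β < α}, seqClosure (seqClIter A β.1)
termination_by α => α
decreasing_by exact β.2

/-- The sequential order of `X`: the least ordinal `α` with `A^{(α+1)} = A^{(α)}` for all `A`. -/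
noncomputable def seqOrder (X : Type u) [TopologicalSpace X] : Ordinal.{0} :=
  sInf {α | ∀ A : Set X, seqClIter A (α + 1) = seqClIter A α}

/-- The cardinality `|[κ]^{≤ω}|` of the family of countable subsets of (a set of cardinality)
`κ`. -/
noncomputable def countableSubsetsCard (c : Cardinal.{u}) : Cardinal.{u} :=
  #{A : Set (Quotient.out c) // A.Countable}

/-- The space `𝕃 = {(0,0)} ∪ {(1/n, 1/(nm)) : n,m ∈ ℕ}` as a subspace of `ℝ²`. -/
def LSpace : Set (ℝ × ℝ) :=
  {(0, 0)} ∪ {p | ∃ n m : ℕ, 0 < n ∧ 0 < m ∧ p = (1 / (n : ℝ), 1 / ((n : ℝ) * (m : ℝ)))}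

/-! Closing a cs*-network `𝒩` at `x` under finite unions does not increase its cardinality,
since in a T1 space `𝒩` is infinite as soon as some sequence converges to `x`. A union-closed
cs*-network of size `< 𝔭` is a cs-network: if no member `N ⊆ U` contains almost all of a
sequence `S → x`, the sets `(S ∩ U) \ N` form a family of fewer than `𝔭` infinite subsets of a
countable set, closed under finite intersections, so they have an infinite pseudo-intersection
`I`; then `I` converges to `x` but meets each such `N` in a finite set. -/

theorem exists_infinite_pseudoIntersection_of_mk_lt_pCard {F : Set (Set ℕ)}
    (hinf : ∀ A ∈ F, A.Infinite) (hinter : ∀ A ∈ F, ∀ B ∈ F, A ∩ B ∈ F) (hF : #F < pCard) :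
    ∃ I : Set ℕ, I.Infinite ∧ ∀ A ∈ F, (I \ A).Finite := by
  by_contra hno
  exact hF.not_ge (csInf_le' ⟨F, hinf, hinter, hno, rfl⟩)

theorem Set.Countable.exists_infinite_pseudoIntersection_of_mk_lt_pCard {α : Type u} {S : Set α}
    (hc : S.Countable) (hS : S.Infinite) {F : Set (Set α)} (hsub : ∀ A ∈ F, A ⊆ S)
    (hinf : ∀ A ∈ F, A.Infinite) (hinter : ∀ A ∈ F, ∀ B ∈ F, A ∩ B ∈ F)
    (hF : #F < lift.{u} pCard) :
    ∃ I ⊆ S, I.Infinite ∧ ∀ A ∈ F, (I \ A).Finite := by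
  have := hc.to_subtype
  have := hS.to_subtype
  obtain ⟨e⟩ := nonempty_equiv_of_countable (α := ℕ) (β := S)
  set f : ℕ → α := Subtype.val ∘ e
  have hf : Function.Injective f := Subtype.val_injective.comp e.injective
  have hrange : range f = S := by
    rw [range_comp, e.range_eq_univ, image_univ, Subtype.range_coe]
  have hF' : #(preimage f '' F) < pCard :=
    lift_lt.{0, u}.1 <|
      (mk_image_le_lift (f := preimage f) (s := F)).trans_lt (by rwa [lift_uzero])
  obtain ⟨I, hI, hIF⟩ := _root_.exists_infinite_pseudoIntersection_of_mk_lt_pCard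
    (F := preimage f '' F)
    (by
      rintro _ ⟨A, hA, rfl⟩
      refine Set.Infinite.preimage' ?_
      rw [hrange, inter_eq_left.2 (hsub A hA)]
      exact hinf A hA)
    (by
      rintro _ ⟨A, hA, rfl⟩ _ ⟨B, hB, rfl⟩
      exact ⟨A ∩ B, hinter A hA B hB, preimage_inter⟩)
    hF'
  refine ⟨f '' I, hrange ▸ image_subset_range f I, hI.image hf.injOn, fun A hA => ?_⟩
  rw [← image_sdiff_preimage]
  exact (hIF _ ⟨A, hA, rfl⟩).image f

theorem Set.Infinite.mk_supClosure_le {α : Type u} [SemilatticeSup α] [OrderBot α]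
    {s : Set α} (hs : s.Infinite) : #(supClosure s) ≤ #s := by
  classical
  have := hs.to_subtype
  have hsub : supClosure s ⊆
      range fun t : Finset s => (t.map (Function.Embedding.subtype _)).sup id := by
    rintro _ ⟨t, ht, hts, rfl⟩
    refine ⟨t.subtype (· ∈ s), ?_⟩
    simp only [Finset.subtype_map_of_mem fun a ha => hts ha, Finset.sup'_eq_sup]
  calc #(supClosure s) ≤ #(Finset s) := (mk_le_mk_of_subset hsub).trans mk_range_le
    _ = #s := mk_finset_of_infinite s

section Networks

variable {X : Type u} [TopologicalSpace X] {x : X} {S T : Set X} {𝒩 : Set (Set X)}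

theorem ConvSeqTo.mono (hS : ConvSeqTo S x) (hTS : T ⊆ S) (hT : T.Infinite) :
    ConvSeqTo T x :=
  ⟨hS.1.mono hTS, hT, fun U hU => (hS.2.2 U hU).subset (sdiff_subset_sdiff_left hTS)⟩

theorem isCsNetworkAt_univ (x : X) : IsCsNetworkAt (univ : Set (Set X)) x :=
  fun U hU _ hS => ⟨U, trivial, subset_rfl, hS.2.2 U hU⟩

theorem IsCsNetworkAt.isCsStarNetworkAt (h : IsCsNetworkAt 𝒩 x) : IsCsStarNetworkAt 𝒩 x := by
  intro U hU S hS
  obtain ⟨N, hN, hNU, hSN⟩ := h U hU S hS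
  refine ⟨N, hN, hNU, ?_⟩
  rw [← sdiff_sdiff_right_self]
  exact hS.2.1.sdiff hSN

theorem IsCsStarNetworkAt.mono {𝒩' : Set (Set X)} (h : IsCsStarNetworkAt 𝒩 x)
    (h𝒩 : 𝒩 ⊆ 𝒩') : IsCsStarNetworkAt 𝒩' x := by
  intro U hU S hS
  obtain ⟨N, hN, hNU, hSN⟩ := h U hU S hS
  exact ⟨N, h𝒩 hN, hNU, hSN⟩

theorem IsCsStarNetworkAt.infinite [T1Space X] (h : IsCsStarNetworkAt 𝒩 x)
    (hS : ConvSeqTo S x) : 𝒩.Infinite := by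
  intro hfin
  have hV : ∀ N : Set X, ∃ V ∈ 𝓝 x, N ⊆ V → N ⊆ {x} := by
    intro N
    by_cases hN : N ⊆ {x}
    · exact ⟨univ, univ_mem, fun _ => hN⟩
    · obtain ⟨y, hyN, hyx⟩ := not_subset.1 hN
      exact ⟨{y}ᶜ, compl_singleton_mem_nhds (Ne.symm hyx), fun hNy => absurd rfl (hNy hyN)⟩
  choose V hVx hV using hV
  obtain ⟨N, hN, hNV, hSN⟩ := h _ ((biInter_mem hfin).2 fun N _ => hVx N) S hS
  have hNx : N ⊆ {x} := hV N (hNV.trans (biInter_subset_of_mem hN))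
  exact hSN ((finite_singleton x).subset (inter_subset_right.trans hNx))

theorem IsCsStarNetworkAt.isCsNetworkAt (h : IsCsStarNetworkAt 𝒩 x) (hsup : SupClosed 𝒩)
    (hcard : #𝒩 < lift.{u} pCard) : IsCsNetworkAt 𝒩 x := by
  intro U hU S hS
  by_contra! hmiss
  have hSU : (S \ U).Finite := hS.2.2 U hU
  have hdiff : ∀ N : Set X, S \ N ⊆ (S ∩ U) \ N ∪ S \ U := fun N y hy => by
    by_cases hyU : y ∈ U
    exacts [Or.inl ⟨⟨hy.1, hyU⟩, hy.2⟩, Or.inr ⟨hy.1, hyU⟩]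
  set F := (fun N => (S ∩ U) \ N) '' {N : Set X | N ∈ 𝒩 ∧ N ⊆ U}
  obtain ⟨I, hIS, hI, hIF⟩ :=
    (hS.1.mono inter_subset_left).exists_infinite_pseudoIntersection_of_mk_lt_pCard (F := F)
    (by simpa using hS.2.1.sdiff hSU)
    (by rintro _ ⟨N, -, rfl⟩; exact sdiff_subset)
    (by
      rintro _ ⟨N, ⟨hN, hNU⟩, rfl⟩
      exact fun hfin => hmiss N hN hNU ((hfin.union hSU).subset (hdiff N)))
    (by
      rintro _ ⟨M, ⟨hM, hMU⟩, rfl⟩ _ ⟨N, ⟨hN, hNU⟩, rfl⟩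
      exact ⟨M ∪ N, ⟨hsup hM hN, union_subset hMU hNU⟩, sdiff_inter_sdiff.symm⟩)
    ((mk_image_le.trans (mk_le_mk_of_subset fun _ hN => hN.1)).trans_lt hcard)
  obtain ⟨N, hN, hNU, hIN⟩ := h U hU I (hS.mono (hIS.trans inter_subset_left) hI)
  exact hIN ((hIF _ ⟨N, ⟨hN, hNU⟩, rfl⟩).subset fun y hy => ⟨hy.1, fun hy' => hy'.2 hy.2⟩)

theorem exists_isCsStarNetworkAt_mk_eq (x : X) :
    ∃ 𝒩 : Set (Set X), IsCsStarNetworkAt 𝒩 x ∧ #𝒩 = csStarCharAt x :=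
  csInf_mem (s := {c | ∃ 𝒩 : Set (Set X), IsCsStarNetworkAt 𝒩 x ∧ #𝒩 = c})
    ⟨_, univ, (isCsNetworkAt_univ x).isCsStarNetworkAt, rfl⟩

theorem csStarCharAt_le_csCharAt (x : X) : csStarCharAt x ≤ csCharAt x := by
  obtain ⟨𝒩, h𝒩, hcard⟩ : ∃ 𝒩 : Set (Set X), IsCsNetworkAt 𝒩 x ∧ #𝒩 = csCharAt x :=
    csInf_mem (s := {c | ∃ 𝒩 : Set (Set X), IsCsNetworkAt 𝒩 x ∧ #𝒩 = c})
      ⟨_, univ, isCsNetworkAt_univ x, rfl⟩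
  exact hcard ▸ csInf_le' ⟨𝒩, h𝒩.isCsStarNetworkAt, rfl⟩

theorem csCharAt_eq_csStarCharAt_of_lt_pCard [T1Space X]
    (hx : csStarCharAt x < lift.{u} pCard) : csCharAt x = csStarCharAt x := by
  refine le_antisymm ?_ (csStarCharAt_le_csCharAt x)
  by_cases hseq : ∃ S, ConvSeqTo S x
  · obtain ⟨S, hS⟩ := hseq
    obtain ⟨𝒩, h𝒩, hcard⟩ := exists_isCsStarNetworkAt_mk_eq x
    have hle : #(supClosure 𝒩) ≤ #𝒩 := (h𝒩.infinite hS).mk_supClosure_le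
    have hcs : IsCsNetworkAt (supClosure 𝒩) x :=
      (h𝒩.mono subset_supClosure).isCsNetworkAt supClosed_supClosure
        (hle.trans_lt (hcard ▸ hx))
    calc csCharAt x ≤ #(supClosure 𝒩) := csInf_le' ⟨_, hcs, rfl⟩
      _ ≤ #𝒩 := hle
      _ = csStarCharAt x := hcard
  · have hempty : IsCsNetworkAt (∅ : Set (Set X)) x := fun _ _ S hS => absurd ⟨S, hS⟩ hseq
    have hle : csCharAt x ≤ #(∅ : Set (Set X)) := csInf_le' ⟨_, hempty, rfl⟩
    exact hle.trans (by simp)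

end Networks

/-- If `X` is a T1 space with `cs*_χ(X) < 𝔭`, then `cs_χ(X) = cs*_χ(X)`. -/
theorem csChar_eq_csStarChar_of_lt_p (X : Type u) [TopologicalSpace X] [T1Space X]
    (h : csStarChar X < Cardinal.lift.{u} pCard) :
    csChar X = csStarChar X := by
  have hpt : ∀ x : X, csCharAt x = csStarCharAt x := fun x =>
    csCharAt_eq_csStarCharAt_of_lt_pCard <|
      ((le_ciSup bddAbove_of_small x).trans (le_max_right _ _)).trans_lt h
  simp only [csChar, csStarChar, hpt]
end

section
/- Let D be an infinite discrete space and αD its one-point compactification. Then cs*_χ(αD) = min{ w(X) : X is a T1 topological space of cardinality |D| containing no non-trivial convergent sequence }, and the same minimum is attained among regular zero-dimensional spaces. -/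
/-! A cs*-network `𝒩` at `∞` in `αD` codes each `d ∈ D` by the members of `𝒩` containing it, a
point of the Cantor cube `2^𝒩`. Applying the network property to sequences in `D` and to
neighbourhoods of `∞` that omit finitely many points shows that this coding is finite-to-one and
that its image, which has a clopen base of size `|𝒩|`, has no convergent sequences at all.
Conversely, if `Y` has no non-trivial convergent sequences, then for any sequence in `Y` every
point has a neighbourhood missing infinitely many of its terms; so finitely many basic sets cover
any finite set while missing infinitely many terms, and, after identifying `Y` with `D`, the
complements of finite unions of basic sets form a cs*-network at `∞`. -/

open Set Filter Topology Cardinal Pointwise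

universe u v

open OnePoint TopologicalSpace

def NoNontrivialConvSeq (Y : Type*) [TopologicalSpace Y] : Prop :=
  ∀ (S : Set Y) (y : Y), ConvSeqTo S y → y ∈ S

section ConvSeq

variable {X : Type*} [TopologicalSpace X]

theorem not_convSeqTo_of_singleton_mem_nhds {x : X} (hx : {x} ∈ 𝓝 x) (S : Set X) :
    ¬ ConvSeqTo S x := fun ⟨_, hS, hfin⟩ => hS ((hfin _ hx).of_sdiff (finite_singleton x))

theorem csStarCharAt_eq_zero_of_singleton_mem_nhds {x : X} (hx : {x} ∈ 𝓝 x) :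
    csStarCharAt x = 0 :=
  nonpos_iff_eq_zero.mp <| csInf_le' ⟨∅, fun _ _ S hS =>
    (not_convSeqTo_of_singleton_mem_nhds hx S hS).elim, mk_eq_zero _⟩

theorem NoNontrivialConvSeq.exists_mem_nhds_infinite_diff (hX : NoNontrivialConvSeq X)
    {T : Set X} (hc : T.Countable) (hi : T.Infinite) (x : X) :
    ∃ U ∈ 𝓝 x, (T \ U).Infinite := by
  by_contra! hfin
  have hconv : ConvSeqTo (T \ {x}) x :=
    ⟨hc.mono sdiff_subset, hi.sdiff (finite_singleton x), fun U hU =>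
      (hfin U hU).subset fun y hy => ⟨hy.1.1, hy.2⟩⟩
  exact (hX _ _ hconv).2 rfl

theorem NoNontrivialConvSeq.exists_finset_cover_infinite_diff (hX : NoNontrivialConvSeq X)
    {B : Set (Set X)} (hB : IsTopologicalBasis B) {T : Set X} (hc : T.Countable)
    (hi : T.Infinite) {F : Set X} (hF : F.Finite) :
    ∃ s : Finset B, F ⊆ ⋃ b ∈ s, (b : Set X) ∧ (T \ ⋃ b ∈ s, (b : Set X)).Infinite := by
  classical
  induction F, hF using Set.Finite.induction_on with
  | empty => exact ⟨∅, empty_subset _, by simpa using hi⟩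
  | @insert x F _ _ ih =>
    obtain ⟨s, hFs, hTs⟩ := ih
    obtain ⟨U, hU, hTU⟩ := hX.exists_mem_nhds_infinite_diff (hc.mono sdiff_subset) hTs x
    obtain ⟨b, hbB, hxb, hbU⟩ := hB.mem_nhds_iff.mp hU
    refine ⟨insert ⟨b, hbB⟩ s, ?_, hTU.mono ?_⟩
    · rw [Finset.set_biUnion_insert]
      exact insert_subset (Or.inl hxb) (hFs.trans subset_union_right)
    · rw [Finset.set_biUnion_insert]
      exact fun y ⟨⟨hyT, hys⟩, hyU⟩ => ⟨hyT, fun h => h.elim (fun hb => hyU (hbU hb)) hys⟩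

theorem ConvSeqTo.infinite_inter {S U : Set X} {x : X}
    (hS : ConvSeqTo S x) (hU : U ∈ 𝓝 x) : (S ∩ U).Infinite := fun h =>
  hS.2.1 <| (h.union (hS.2.2 U hU)).subset (inter_union_sdiff S U).ge

theorem isCsStarNetworkAt_univ (x : X) :
    IsCsStarNetworkAt univ x := fun U hU _ hS => ⟨U, mem_univ U, subset_rfl, hS.infinite_inter hU⟩

end ConvSeq

section Weight

variable {X : Type*} [TopologicalSpace X]

theorem TopologicalSpace.IsTopologicalBasis.infinite [T1Space X] [Infinite X] {B : Set (Set X)}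
    (hB : IsTopologicalBasis B) : B.Infinite := fun hfin =>
  have : Finite B := hfin.to_subtype
  not_finite_iff_infinite.mpr ‹Infinite X› <| Finite.of_injective
    (fun x : X => {b : B | x ∈ (b : Set X)}) fun x y hxy =>
      hB.eq_iff.mpr fun b hb => Set.ext_iff.mp hxy ⟨b, hb⟩

theorem exists_isTopologicalBasis_mk_eq_weightCard (X : Type u) [TopologicalSpace X] :
    ∃ B : Set (Set X), IsTopologicalBasis B ∧ #B = weightCard X :=
  csInf_mem (s := {c | ∃ B : Set (Set X), IsTopologicalBasis B ∧ #B = c})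
    ⟨_, _, isTopologicalBasis_opens, rfl⟩

theorem weightCard_le_mk {B : Set (Set X)} (hB : IsTopologicalBasis B) : weightCard X ≤ #B :=
  csInf_le' (s := {c | ∃ B : Set (Set X), IsTopologicalBasis B ∧ #B = c}) ⟨B, hB, rfl⟩

theorem aleph0_le_weightCard [T1Space X] [Infinite X] : ℵ₀ ≤ weightCard X :=
  le_csInf ⟨_, _, isTopologicalBasis_opens, rfl⟩ fun _ ⟨_, hB, hc⟩ =>
    hc ▸ infinite_iff.mp (infinite_coe_iff.mpr hB.infinite)

end Weight

theorem Cardinal.mk_range_eq_of_finite_preimage {α β : Type u} [Infinite α] (f : α → β)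
    (hf : ∀ b, (f ⁻¹' {b}).Finite) : #(range f) = #α := by
  have : Infinite (range f) := infinite_coe_iff.mpr fun hfin =>
    infinite_univ (α := α) (by simpa using hfin.preimage' fun b _ => hf b)
  refine le_antisymm mk_range_le ?_
  calc #α ≤ #(range f) * ℵ₀ := mk_le_mk_mul_of_mk_preimage_le (rangeFactorization f) fun b => by
        rw [show rangeFactorization f ⁻¹' {b} = f ⁻¹' {b.1} by ext; simp [Subtype.ext_iff]]
        exact (hf b).lt_aleph0.le
    _ = #(range f) := mul_aleph0_eq (aleph0_le_mk _)

section CantorCube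

variable (ι : Type u) [Infinite ι]

theorem exists_clopen_basis_pi_bool :
    ∃ B : Set (Set (ι → Bool)), IsTopologicalBasis B ∧ (∀ U ∈ B, IsClopen U) ∧ #B ≤ #ι := by
  classical
  let cyl : Finset (ι × Bool) → Set (ι → Bool) := fun s => {f | ∀ p ∈ s, f p.1 = p.2}
  have hcyl (s) : IsClopen (cyl s) := by
    simp only [cyl, ofPred_forall]
    exact isClopen_biInter_finset fun p _ =>
      (isClopen_discrete {p.2}).preimage (continuous_apply p.1)
  refine ⟨range cyl, isTopologicalBasis_of_isOpen_of_nhds ?_ ?_, ?_, ?_⟩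
  · rintro _ ⟨s, rfl⟩
    exact (hcyl s).isOpen
  · intro f U hf hU
    obtain ⟨I, u, hu, hIU⟩ := isOpen_pi_iff.mp hU f hf
    refine ⟨_, mem_range_self (I.image fun i => (i, f i)), by simp [cyl],
      fun g hg => hIU fun i hi => ?_⟩
    have hgi : g i = f i := by simpa using hg (i, f i) (Finset.mem_image_of_mem _ hi)
    exact hgi ▸ (hu i hi).2
  · rintro _ ⟨s, rfl⟩
    exact hcyl s
  · calc #(range cyl) ≤ #(Finset (ι × Bool)) := mk_range_le
      _ = #ι := by
        rw [mk_finset_of_infinite, mk_prod, mk_fintype Bool, lift_uzero, lift_natCast]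
        exact mul_eq_left (aleph0_le_mk ι) (natCast_lt_aleph0.le.trans (aleph0_le_mk ι))
          (by simp)

theorem exists_clopen_basis_subtype_pi_bool (Z : Set (ι → Bool)) :
    ∃ B : Set (Set Z), IsTopologicalBasis B ∧ (∀ U ∈ B, IsClopen U) ∧ #B ≤ #ι := by
  obtain ⟨B, hB, hBcl, hBcard⟩ := exists_clopen_basis_pi_bool ι
  exact ⟨_, hB.isInducing .subtypeVal,
    fun _ ⟨U, hU, hUZ⟩ => hUZ ▸ (hBcl U hU).preimage continuous_subtype_val,
    mk_image_le.trans hBcard⟩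

end CantorCube

section OnePoint

variable {D : Type u} [TopologicalSpace D] [DiscreteTopology D]

theorem OnePoint.mem_nhds_infty_iff_of_discrete {U : Set (OnePoint D)} :
    U ∈ 𝓝 (∞ : OnePoint D) ↔ ∞ ∈ U ∧ ((↑) ⁻¹' U : Set D)ᶜ.Finite := by
  rw [nhds_infty_eq, coclosedCompact_eq_cocompact, cocompact_eq_cofinite]
  simp [and_comm]

theorem OnePoint.singleton_coe_mem_nhds (d : D) : {(d : OnePoint D)} ∈ 𝓝 (d : OnePoint D) :=
  (image_singleton (f := ((↑) : D → OnePoint D)) ▸ isOpenMap_coe _ (isOpen_discrete {d})).mem_nhds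
    rfl

theorem OnePoint.convSeqTo_infty_iff {S : Set (OnePoint D)} :
    ConvSeqTo S ∞ ↔ S.Countable ∧ S.Infinite := by
  refine ⟨fun h => ⟨h.1, h.2.1⟩, fun ⟨hc, hi⟩ => ⟨hc, hi, fun U hU => ?_⟩⟩
  rw [mem_nhds_infty_iff_of_discrete] at hU
  refine (hU.2.image (↑)).subset ?_
  rintro (_ | d) ⟨-, hx⟩
  · exact (hx hU.1).elim
  · exact ⟨d, hx, rfl⟩

theorem OnePoint.csStarChar_eq_max_csStarCharAt_infty :
    csStarChar (OnePoint D) = max 1 (csStarCharAt (∞ : OnePoint D)) := by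
  refine congrArg (max 1) (le_antisymm (ciSup_le fun x => ?_) (le_ciSup bddAbove_of_small ∞))
  induction x using OnePoint.rec with
  | infty => exact le_rfl
  | coe d =>
    rw [csStarCharAt_eq_zero_of_singleton_mem_nhds (singleton_coe_mem_nhds d)]
    exact zero_le

end OnePoint

section LowerBound

variable {D : Type u} [TopologicalSpace D] [DiscreteTopology D] [Infinite D]

theorem csStarCharAt_infty_le_weightCard {Y : Type u} [TopologicalSpace Y] [T1Space Y]
    (e : D ≃ Y) (hY : NoNontrivialConvSeq Y) :
    csStarCharAt (∞ : OnePoint D) ≤ weightCard Y := by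
  have : Infinite Y := e.infinite_iff.mp ‹_›
  obtain ⟨B, hB, hBw⟩ := exists_isTopologicalBasis_mk_eq_weightCard Y
  have : Infinite B := hB.infinite.to_subtype
  let N : Finset B → Set (OnePoint D) := fun s => (↑) '' (e ⁻¹' (⋃ b ∈ s, (b : Set Y))ᶜ)
  have hN : IsCsStarNetworkAt (range N) ∞ := by
    intro U hU S hS
    rw [mem_nhds_infty_iff_of_discrete] at hU
    obtain ⟨hc, hi⟩ := convSeqTo_infty_iff.mp hS
    have hi' : ((↑) ⁻¹' S : Set D).Infinite :=
      Infinite.preimage' (by rw [← compl_infty, ← sdiff_eq]; exact hi.sdiff (finite_singleton ∞))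
    obtain ⟨s, hUs, hSs⟩ := hY.exists_finset_cover_infinite_diff hB
      ((hc.preimage coe_injective).image e) (hi'.image e.injective.injOn) (hU.2.image e)
    refine ⟨N s, mem_range_self s, ?_, ?_⟩
    · rintro _ ⟨d, hd, rfl⟩
      by_contra hdU
      exact hd (hUs ⟨d, hdU, rfl⟩)
    · refine (hSs.image ((coe_injective.comp e.symm.injective).injOn)).mono ?_
      rintro _ ⟨_, ⟨⟨d, hdS, rfl⟩, hds⟩, rfl⟩
      exact ⟨by simpa using hdS, d, hds, by simp⟩
  calc csStarCharAt (∞ : OnePoint D) ≤ #(range N) := csInf_le' ⟨_, hN, rfl⟩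
    _ ≤ #(Finset B) := mk_range_le
    _ = weightCard Y := by rw [mk_finset_of_infinite, hBw]

theorem csStarChar_onePoint_le_weightCard {Y : Type u} [TopologicalSpace Y] [T1Space Y]
    (hcard : #Y = #D) (hY : NoNontrivialConvSeq Y) : csStarChar (OnePoint D) ≤ weightCard Y := by
  obtain ⟨e⟩ := Cardinal.eq.mp hcard.symm
  have : Infinite Y := e.infinite_iff.mp ‹_›
  rw [csStarChar_eq_max_csStarCharAt_infty]
  exact max_le (one_le_aleph0.trans aleph0_le_weightCard) (csStarCharAt_infty_le_weightCard e hY)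

end LowerBound

open scoped Classical in
noncomputable def traceMap {D : Type u} (𝒩 : Set (Set (OnePoint D))) (d : D) : 𝒩 → Bool :=
  fun N => decide ((d : OnePoint D) ∈ (N : Set (OnePoint D)))

@[simp]
theorem traceMap_eq_true_iff {D : Type u} {𝒩 : Set (Set (OnePoint D))} {d : D} {N : 𝒩} :
    traceMap 𝒩 d N = true ↔ (d : OnePoint D) ∈ (N : Set (OnePoint D)) := by
  simp [traceMap]

section UpperBound

variable {D : Type u} [TopologicalSpace D] [DiscreteTopology D]

theorem exists_isCsStarNetworkAt_mk_eq_csStarCharAt {X : Type u} [TopologicalSpace X] (x : X) :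
    ∃ 𝒩 : Set (Set X), IsCsStarNetworkAt 𝒩 x ∧ #𝒩 = csStarCharAt x :=
  csInf_mem (s := {c | ∃ 𝒩 : Set (Set X), IsCsStarNetworkAt 𝒩 x ∧ #𝒩 = c})
    ⟨_, _, isCsStarNetworkAt_univ x, rfl⟩

theorem IsCsStarNetworkAt.exists_disjoint_infinite_inter {𝒩 : Set (Set (OnePoint D))}
    (h𝒩 : IsCsStarNetworkAt 𝒩 ∞) {F A : Set D} (hF : F.Finite) (hAc : A.Countable)
    (hAi : A.Infinite) : ∃ N ∈ 𝒩, Disjoint F ((↑) ⁻¹' N) ∧ (A ∩ (↑) ⁻¹' N).Infinite := by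
  have hU : ((↑) '' F : Set (OnePoint D))ᶜ ∈ 𝓝 ∞ := by
    rw [mem_nhds_infty_iff_of_discrete, preimage_compl, compl_compl, coe_injective.preimage_image]
    exact ⟨fun ⟨d, _, hd⟩ => coe_ne_infty d hd, hF⟩
  obtain ⟨N, hN, hNU, hAN⟩ := h𝒩 _ hU ((↑) '' A)
    (convSeqTo_infty_iff.mpr ⟨hAc.image _, hAi.image coe_injective.injOn⟩)
  rw [← image_inter_preimage] at hAN
  exact ⟨N, hN, disjoint_left.mpr fun d hdF hdN => hNU hdN ⟨d, hdF, rfl⟩, hAN.of_image _⟩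

theorem finite_traceMap_preimage_singleton {𝒩 : Set (Set (OnePoint D))}
    (h𝒩 : IsCsStarNetworkAt 𝒩 ∞) (y : 𝒩 → Bool) :
    (traceMap 𝒩 ⁻¹' {y}).Finite := by
  refine not_infinite.mp fun hinf => ?_
  obtain ⟨d, hd⟩ := hinf.nonempty
  obtain ⟨A, hAy, hAc, hAi⟩ := Infinite.exists_subset_countable_infinite hinf
  obtain ⟨N, hN, hdN, hAN⟩ :=
    h𝒩.exists_disjoint_infinite_inter (finite_singleton d) hAc hAi
  obtain ⟨x, hxA, hxN⟩ := hAN.nonempty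
  have hxd : traceMap 𝒩 x ⟨N, hN⟩ = traceMap 𝒩 d ⟨N, hN⟩ := by
    rw [show traceMap 𝒩 x = y from hAy hxA, show traceMap 𝒩 d = y from hd]
  rw [traceMap_eq_true_iff.mpr hxN, eq_comm, traceMap_eq_true_iff] at hxd
  exact disjoint_left.mp hdN rfl hxd

theorem not_convSeqTo_range_traceMap {𝒩 : Set (Set (OnePoint D))}
    (h𝒩 : IsCsStarNetworkAt 𝒩 ∞) (S : Set (range (traceMap 𝒩))) (y : range (traceMap 𝒩)) :
    ¬ ConvSeqTo S y := by
  intro hS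
  set r := rangeSplitting (traceMap 𝒩)
  obtain ⟨N, hN, hyN, hSN⟩ := h𝒩.exists_disjoint_infinite_inter
    (finite_traceMap_preimage_singleton h𝒩 y) (hS.1.image r)
    (hS.2.1.image (rangeSplitting_injective _).injOn)
  let V := (fun z : range (traceMap 𝒩) => (z : 𝒩 → Bool) ⟨N, hN⟩) ⁻¹' {false}
  have hyV : y ∈ V := by
    have hry : traceMap 𝒩 (r y) = y := apply_rangeSplitting _ y
    rw [mem_preimage, mem_singleton_iff, ← hry, Bool.eq_false_iff, Ne, traceMap_eq_true_iff]
    exact disjoint_left.mp hyN hry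
  have hV : IsOpen V :=
    (isOpen_discrete {false}).preimage ((continuous_apply _).comp continuous_subtype_val)
  refine hSN (((hS.2.2 V (hV.mem_nhds hyV)).image r).subset ?_)
  rintro _ ⟨⟨z, hz, rfl⟩, hzN⟩
  refine ⟨z, ⟨hz, fun hzV => ?_⟩, rfl⟩
  have hrz : traceMap 𝒩 (r z) = z := apply_rangeSplitting _ z
  have hzV' : (z : 𝒩 → Bool) ⟨N, hN⟩ = false := hzV
  rw [← hrz, traceMap_eq_true_iff.mpr hzN] at hzV'
  cases hzV'

theorem exists_zeroDim_noNontrivialConvSeq_weightCard_le_csStarCharAt [Infinite D] :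
    ∃ (Y : Type u) (_ : TopologicalSpace Y), T1Space Y ∧ RegularSpace Y ∧
      (∃ B : Set (Set Y), IsTopologicalBasis B ∧ ∀ U ∈ B, IsClopen U) ∧
      #Y = #D ∧ NoNontrivialConvSeq Y ∧ weightCard Y ≤ csStarCharAt (∞ : OnePoint D) := by
  obtain ⟨𝒩, h𝒩, h𝒩card⟩ := exists_isCsStarNetworkAt_mk_eq_csStarCharAt (∞ : OnePoint D)
  have hcard : #(range (traceMap 𝒩)) = #D :=
    mk_range_eq_of_finite_preimage _ (finite_traceMap_preimage_singleton h𝒩)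
  have : Infinite 𝒩 := not_finite_iff_infinite.mp fun _ =>
    have : Finite D := mk_lt_aleph0_iff.mp (hcard ▸ lt_aleph0_of_finite _)
    not_finite D
  obtain ⟨B, hB, hBcl, hBcard⟩ := exists_clopen_basis_subtype_pi_bool 𝒩 (range (traceMap 𝒩))
  exact ⟨_, inferInstance, inferInstance, inferInstance, ⟨B, hB, hBcl⟩, hcard,
    fun S y hS => (not_convSeqTo_range_traceMap h𝒩 S y hS).elim,
    (weightCard_le_mk hB).trans (hBcard.trans_eq h𝒩card)⟩

end UpperBound

/-- For an infinite discrete space `D`, `cs*_χ(αD)` equals the minimal weight of a T1 space of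
cardinality `|D|` without non-trivial convergent sequences, and this minimum is also attained
among regular zero-dimensional spaces. -/
theorem csStarChar_onePoint_eq_min_weight (D : Type u) [TopologicalSpace D]
    [DiscreteTopology D] [Infinite D] :
    csStarChar (OnePoint D) =
      sInf {c | ∃ (Y : Type u) (ts : TopologicalSpace Y), @T1Space Y ts ∧ #Y = #D ∧
        (∀ (S : Set Y) (y : Y), @ConvSeqTo Y ts S y → y ∈ S) ∧ @weightCard Y ts = c} ∧
    csStarChar (OnePoint D) =
      sInf {c | ∃ (Y : Type u) (ts : TopologicalSpace Y), @T1Space Y ts ∧ @RegularSpace Y ts ∧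
        (∃ B : Set (Set Y), @TopologicalSpace.IsTopologicalBasis Y ts B ∧
          ∀ U ∈ B, @IsClopen Y ts U) ∧
        #Y = #D ∧ (∀ (S : Set Y) (y : Y), @ConvSeqTo Y ts S y → y ∈ S) ∧
        @weightCard Y ts = c} := by
  obtain ⟨Y₀, ts₀, hT1, hreg, hclopen, hcard, hY₀, hw⟩ :=
    exists_zeroDim_noNontrivialConvSeq_weightCard_le_csStarCharAt (D := D)
  have hw₀ : weightCard Y₀ = csStarChar (OnePoint D) :=
    le_antisymm (hw.trans ((le_max_right _ _).trans_eq csStarChar_eq_max_csStarCharAt_infty.symm))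
      (csStarChar_onePoint_le_weightCard hcard hY₀)
  refine ⟨(IsLeast.csInf_eq ?_).symm, (IsLeast.csInf_eq ?_).symm⟩
  · refine ⟨⟨Y₀, ts₀, hT1, hcard, hY₀, hw₀⟩, ?_⟩
    rintro _ ⟨Y, ts, hT1, hcard, hY, rfl⟩
    exact csStarChar_onePoint_le_weightCard hcard hY
  · refine ⟨⟨Y₀, ts₀, hT1, hreg, hclopen, hcard, hY₀, hw₀⟩, ?_⟩
    rintro _ ⟨Y, ts, hT1, -, -, hcard, hY, rfl⟩
    exact csStarChar_onePoint_le_weightCard hcard hY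
end
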